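/- arXiv:2101.12468 — 4 statements merged into one kernel-verified Lean document; each statement's English description precedes it below -/
import Mathlib

section
/- An injective partial map α on {1,…,n} is an injective partial endomorphism of the path P_n (i.e., for all u,v in the domain of α, if |u−v|=1 then |α(u)−α(v)|=1) if and only if for each interval I of the domain of α, the image α(I) is an interval of the image of α. -/
open scoped Classical

/-- `adj u v` means `|u - v| = 1`, i.e. `u` and `v` are adjacent in the path. -/
def adj (u v : ℕ) : Prop := u + 1 = v ∨ v + 1 = u

/-- `f` is an injective partial endomorphism of the path `P_n` on `{1,…,n}`. -/
structure IsIEnd (n : ℕ) (f : ℕ →. ℕ) : Prop where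
  dom_subset : f.Dom ⊆ Set.Icc 1 n
  ran_subset : f.ran ⊆ Set.Icc 1 n
  inj : ∀ ⦃x y a : ℕ⦄, a ∈ f x → a ∈ f y → x = y
  edge : ∀ ⦃u v a b : ℕ⦄, a ∈ f u → b ∈ f v → adj u v → adj a b

/-- `f` is a partial automorphism of the path `P_n`. -/
def IsPAut (n : ℕ) (f : ℕ →. ℕ) : Prop :=
  IsIEnd n f ∧ ∀ ⦃u v a b : ℕ⦄, a ∈ f u → b ∈ f v → adj a b → adj u v

/-- Left-to-right composition of partial maps: `x (pcomp f g) = (x f) g`. -/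
def pcomp (f g : ℕ →. ℕ) : ℕ →. ℕ := PFun.comp g f

/-- The inverse of an injective partial map. -/
noncomputable def pinv (f : ℕ →. ℕ) : ℕ →. ℕ :=
  fun y => ⟨∃ x, y ∈ f x, fun h => h.choose⟩

/-- `I` is an interval of `X`: a set of consecutive integers contained in `X`. -/
def IsIntervalOf (I X : Set ℕ) : Prop :=
  I ⊆ X ∧ ∀ ⦃x⦄, x ∈ I → ∀ ⦃y⦄, y ∈ I → ∀ ⦃z : ℕ⦄, x < z → z < y → z ∈ I

/-- `I` is a maximal interval of `X`. -/
def IsMaxIntervalOf (I X : Set ℕ) : Prop :=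
  IsIntervalOf I X ∧ ∀ J, IsIntervalOf J X → I ⊆ J → I = J

/-!
A map preserving adjacency changes its value by exactly one at each step, so along a run of
consecutive points of its domain it takes every value between any two of its values (a discrete
intermediate value theorem); hence it maps intervals to intervals. Conversely, two adjacent
points `u, v` of the domain form an interval, whose image `{f u, f v}` has two elements by
injectivity; being a set of consecutive integers, it forces `f u` and `f v` to be adjacent.
-/

open Set

theorem adj.ne {u v : ℕ} (h : adj u v) : u ≠ v := by
  unfold adj at h
  omega

theorem PFun.image_pair {α β : Type*} {f : α →. β} {u v : α} {a b : β}
    (ha : a ∈ f u) (hb : b ∈ f v) : f.image {u, v} = {a, b} := by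
  ext c
  simp [PFun.mem_image, Part.eq_some_iff.2 ha, Part.eq_some_iff.2 hb, eq_comm]

namespace IsIntervalOf

variable {I X : Set ℕ}

theorem Icc_subset (hI : IsIntervalOf I X) {x y : ℕ} (hx : x ∈ I) (hy : y ∈ I) :
    Icc x y ⊆ I := by
  rintro z ⟨hxz, hzy⟩
  rcases hxz.eq_or_lt with rfl | hxz
  · exact hx
  rcases hzy.eq_or_lt with rfl | hzy
  · exact hy
  exact hI.2 hx hy hxz hzy

theorem pair {u v : ℕ} (huv : adj u v) (hu : u ∈ X) (hv : v ∈ X) : IsIntervalOf {u, v} X := by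
  refine ⟨pair_subset hu hv, ?_⟩
  unfold adj at huv
  rintro x (rfl | rfl) y (rfl | rfl) z <;> omega

theorem adj_of_pair {a b : ℕ} (h : IsIntervalOf {a, b} X) (hab : a ≠ b) : adj a b := by
  by_contra hnadj
  unfold adj at hnadj
  rcases hab.lt_or_gt with hlt | hlt
  · have := h.2 (mem_insert a _) (mem_insert_of_mem a rfl) (z := a + 1) (by omega) (by omega)
    simp only [mem_insert_iff, mem_singleton_iff] at this
    omega
  · have := h.2 (mem_insert_of_mem a rfl) (mem_insert a _) (z := b + 1) (by omega) (by omega)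
    simp only [mem_insert_iff, mem_singleton_iff] at this
    omega

end IsIntervalOf

section AdjacencyPreserving

variable {f : ℕ →. ℕ} {I : Set ℕ} {x y a b c : ℕ}

theorem PFun.exists_mem_of_mem_uIcc
    (hedge : ∀ ⦃u v a b : ℕ⦄, a ∈ f u → b ∈ f v → adj u v → adj a b)
    (hxy : x ≤ y) (hdom : Icc x y ⊆ f.Dom) (ha : a ∈ f x) (hb : b ∈ f y)
    (hc : c ∈ uIcc a b) : ∃ z ∈ Icc x y, c ∈ f z := by
  induction y, hxy using Nat.le_induction generalizing b with
  | base =>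
    obtain rfl := Part.mem_unique ha hb
    rw [uIcc_self, mem_singleton_iff] at hc
    exact ⟨x, left_mem_Icc.2 le_rfl, hc ▸ ha⟩
  | succ y hxy ih =>
    obtain ⟨b', hb'⟩ := (PFun.mem_dom f y).1 (hdom ⟨hxy, y.le_succ⟩)
    by_cases hc' : c ∈ uIcc a b'
    · obtain ⟨z, hz, hcz⟩ := ih ((Icc_subset_Icc_right y.le_succ).trans hdom) hb' hc'
      exact ⟨z, Icc_subset_Icc_right y.le_succ hz, hcz⟩
    · have hstep := hedge hb' hb (Or.inl rfl)
      have hcb : c = b := by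
        simp only [mem_uIcc, adj] at hc hc' hstep
        omega
      exact ⟨y + 1, right_mem_Icc.2 (hxy.trans y.le_succ), hcb ▸ hb⟩

theorem PFun.mem_image_of_mem_uIcc
    (hedge : ∀ ⦃u v a b : ℕ⦄, a ∈ f u → b ∈ f v → adj u v → adj a b)
    (hI : IsIntervalOf I f.Dom) (hx : x ∈ I) (hy : y ∈ I) (ha : a ∈ f x) (hb : b ∈ f y)
    (hc : c ∈ uIcc a b) :
    c ∈ f.image I := by
  wlog hxy : x ≤ y
  · exact this hedge hI hy hx hb ha (uIcc_comm a b ▸ hc) (le_of_not_ge hxy)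
  obtain ⟨z, hz, hcz⟩ :=
    PFun.exists_mem_of_mem_uIcc hedge hxy ((hI.Icc_subset hx hy).trans hI.1) ha hb hc
  exact ⟨z, hI.Icc_subset hx hy hz, hcz⟩

theorem IsIntervalOf.pfun_image
    (hedge : ∀ ⦃u v a b : ℕ⦄, a ∈ f u → b ∈ f v → adj u v → adj a b)
    (hI : IsIntervalOf I f.Dom) : IsIntervalOf (f.image I) f.ran := by
  refine ⟨fun b ⟨x, _, hb⟩ => ⟨x, hb⟩, ?_⟩
  rintro a ⟨x, hx, ha⟩ b ⟨y, hy, hb⟩ c hac hcb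
  exact PFun.mem_image_of_mem_uIcc hedge hI hx hy ha hb (Icc_subset_uIcc ⟨hac.le, hcb.le⟩)

end AdjacencyPreserving

theorem stmt0 (n : ℕ) (f : ℕ →. ℕ)
    (hdom : f.Dom ⊆ Set.Icc 1 n) (hran : f.ran ⊆ Set.Icc 1 n)
    (hinj : ∀ ⦃x y a : ℕ⦄, a ∈ f x → a ∈ f y → x = y) :
    IsIEnd n f ↔
      ∀ I : Set ℕ, IsIntervalOf I f.Dom → IsIntervalOf (f.image I) f.ran := by
  refine ⟨fun hf I hI => hI.pfun_image hf.edge, fun h => ⟨hdom, hran, hinj, ?_⟩⟩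
  intro u v a b ha hb huv
  have hpair : IsIntervalOf {u, v} f.Dom :=
    IsIntervalOf.pair huv ((PFun.mem_dom f u).2 ⟨a, ha⟩) ((PFun.mem_dom f v).2 ⟨b, hb⟩)
  have hab : a ≠ b := fun hab => huv.ne (hinj ha (hab ▸ hb))
  exact IsIntervalOf.adj_of_pair (PFun.image_pair ha hb ▸ h _ hpair) hab
end

section
/- If α is an injective partial endomorphism of the path P_n and I is an interval contained in the domain of α, then the restriction of α to I is either order-preserving or order-reversing. -/
open scoped Classical

/-!
Restricted to an interval, an injective partial endomorphism `f` of the path moves by `±1` at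
each step. Two consecutive steps `x ↦ x + 1 ↦ x + 2` must go the same way: otherwise
`f (x + 2) = f x`, contradicting injectivity. Hence all steps inside the interval share one
direction, and `f` is strictly monotone or strictly antitone there.
-/

theorem IsIntervalOf.ordConnected {I X : Set ℕ} (hI : IsIntervalOf I X) : I.OrdConnected := by
  refine ⟨fun x hx y hy z ⟨hxz, hzy⟩ => ?_⟩
  rcases hxz.eq_or_lt with rfl | hxz
  · exact hx
  rcases hzy.eq_or_lt with rfl | hzy
  · exact hy
  exact hI.2 hx hy hxz hzy

theorem Part.getOrElse_mem {α : Type*} {o : Part α} [Decidable o.Dom] (h : o.Dom) (d : α) :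
    o.getOrElse d ∈ o := by
  rw [Part.getOrElse_of_dom o h]
  exact Part.get_mem h

theorem Part.getOrElse_eq_of_mem {α : Type*} {o : Part α} [Decidable o.Dom] {a : α} (h : a ∈ o)
    (d : α) : o.getOrElse d = a :=
  Part.mem_unique (Part.getOrElse_mem (Part.dom_iff_mem.2 ⟨a, h⟩) d) h

section PathSteps

variable {g : ℕ → ℕ} {s : Set ℕ}

theorem step_up_iff_step_up_succ (hadj : ∀ x ∈ s, x + 1 ∈ s → adj (g x) (g (x + 1)))
    (hinj : s.InjOn g) {x : ℕ} (hx : x ∈ s) (hx₁ : x + 1 ∈ s) (hx₂ : x + 2 ∈ s) :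
    g (x + 1) = g x + 1 ↔ g (x + 2) = g (x + 1) + 1 := by
  have hne : g (x + 2) ≠ g x := fun h => by simpa using hinj hx₂ hx h
  have h₁ : adj (g (x + 1)) (g (x + 2)) := hadj (x + 1) hx₁ hx₂
  rcases hadj x hx hx₁ with h₀ | h₀ <;> rcases h₁ with h₁ | h₁ <;> omega

theorem step_up_iff_of_le (hadj : ∀ x ∈ s, x + 1 ∈ s → adj (g x) (g (x + 1)))
    (hinj : s.InjOn g) (hs : s.OrdConnected) {x y : ℕ} (hxy : x ≤ y) (hx : x ∈ s)
    (hy : y + 1 ∈ s) : g (x + 1) = g x + 1 ↔ g (y + 1) = g y + 1 := by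
  induction y, hxy using Nat.le_induction with
  | base => rfl
  | succ y hxy ih =>
    have hy₀ : y + 1 ∈ s := hs.out hx hy ⟨by omega, by omega⟩
    rw [ih hy₀]
    exact step_up_iff_step_up_succ hadj hinj (hs.out hx hy ⟨hxy, by omega⟩) hy₀ hy

theorem strictMonoOn_or_strictAntiOn_of_adj
    (hadj : ∀ x ∈ s, x + 1 ∈ s → adj (g x) (g (x + 1))) (hinj : s.InjOn g)
    (hs : s.OrdConnected) : StrictMonoOn g s ∨ StrictAntiOn g s := by
  by_cases hup : ∀ x ∈ s, x + 1 ∈ s → g (x + 1) = g x + 1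
  · exact Or.inl <| strictMonoOn_of_lt_add_one hs fun x _ hx hx₁ => by
      rw [hup x hx hx₁]; omega
  push Not at hup
  obtain ⟨x₀, hx₀, hx₀₁, hdown⟩ := hup
  refine Or.inr <| strictAntiOn_of_add_one_lt hs fun x _ hx hx₁ => ?_
  have hx_down : g (x + 1) ≠ g x + 1 := by
    rcases le_total x x₀ with h | h
    · exact fun hup => hdown ((step_up_iff_of_le hadj hinj hs h hx hx₀₁).1 hup)
    · exact fun hup => hdown ((step_up_iff_of_le hadj hinj hs h hx₀ hx₁).2 hup)
  rcases hadj x hx hx₁ with h | h <;> omega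

end PathSteps

theorem stmt1 (n : ℕ) (f : ℕ →. ℕ) (hf : IsIEnd n f) (I : Set ℕ)
    (hI : IsIntervalOf I f.Dom) :
    (∀ ⦃x y a b : ℕ⦄, x ∈ I → y ∈ I → a ∈ f x → b ∈ f y → x < y → a < b) ∨
    (∀ ⦃x y a b : ℕ⦄, x ∈ I → y ∈ I → a ∈ f x → b ∈ f y → x < y → b < a) := by
  -- `f` made total with the junk value `0`, which is never read on `I ⊆ f.Dom`
  set g : ℕ → ℕ := fun x => (f x).getOrElse 0
  have hg : ∀ ⦃x a⦄, a ∈ f x → g x = a := fun _ _ h => Part.getOrElse_eq_of_mem h 0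
  have hg_mem : ∀ x ∈ I, g x ∈ f x := fun x hx => Part.getOrElse_mem (hI.1 hx) 0
  have hadj : ∀ x ∈ I, x + 1 ∈ I → adj (g x) (g (x + 1)) := fun x hx hx₁ =>
    hf.edge (hg_mem x hx) (hg_mem _ hx₁) (Or.inl rfl)
  have hinj : I.InjOn g := fun x hx y hy h =>
    hf.inj (hg_mem x hx) (h ▸ hg_mem y hy)
  rcases strictMonoOn_or_strictAntiOn_of_adj hadj hinj hI.ordConnected with h | h
  · exact Or.inl fun x y a b hx hy ha hb hxy => hg ha ▸ hg hb ▸ h hx hy hxy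
  · exact Or.inr fun x y a b hx hy ha hb hxy => hg ha ▸ hg hb ▸ h hx hy hxy
end

section
/- If α is a partial automorphism of the path P_n and I is a maximal interval of Dom α, then α(I) is a maximal interval of Im α. -/
open scoped Classical

/-!
A maximal interval of `X ⊆ ℕ` is the same as a nonempty (unless `X = ∅`) order-connected
subset of `X` that is closed under taking neighbours in `X`. A partial automorphism `f` of a path
maps an interval `I` of its domain to an interval of its range, by a discrete intermediate value
argument: consecutive points of `I` go to adjacent points. Closure under neighbours transfers from
`I` to `f(I)` because `f⁻¹` also preserves adjacency.
-/

open Set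
open scoped Interval

lemma isIntervalOf_iff {I X : Set ℕ} : IsIntervalOf I X ↔ I ⊆ X ∧ I.OrdConnected :=
  and_congr_right fun _ =>
    ⟨fun h => ordConnected_of_Ioo fun _ hx _ hy _ _ hz => h hx hy hz.1 hz.2,
      fun h _ hx _ hy _ hxz hzy => h.out hx hy ⟨hxz.le, hzy.le⟩⟩

lemma uIcc_subset_image_Icc_of_step_le_one {g : ℕ → ℕ} {a b : ℕ} (hab : a ≤ b)
    (hg : ∀ k ∈ Ico a b, g (k + 1) ≤ g k + 1 ∧ g k ≤ g (k + 1) + 1) :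
    [[g a, g b]] ⊆ g '' Icc a b := by
  induction b, hab using Nat.le_induction with
  | base => simp
  | succ b hab ih =>
    intro z hz
    by_cases hzb : z ∈ [[g a, g b]]
    · obtain ⟨k, hk, rfl⟩ := ih (fun k hk => hg k ⟨hk.1, hk.2.trans (Nat.lt_succ_self b)⟩) hzb
      exact ⟨k, ⟨hk.1, hk.2.trans (Nat.le_succ b)⟩, rfl⟩
    · have hstep := hg b ⟨hab, Nat.lt_succ_self b⟩
      rw [mem_uIcc] at hz hzb
      exact ⟨b + 1, ⟨by omega, le_rfl⟩, by omega⟩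

lemma IsIntervalOf.image {f : ℕ →. ℕ} {I : Set ℕ}
    (hedge : ∀ ⦃u v a b : ℕ⦄, a ∈ f u → b ∈ f v → adj u v → adj a b)
    (hI : IsIntervalOf I f.Dom) : IsIntervalOf (f.image I) f.ran := by
  rw [isIntervalOf_iff] at hI ⊢
  refine ⟨fun y ⟨x, _, hy⟩ => ⟨x, hy⟩, ordConnected_iff_uIcc_subset.2 ?_⟩
  rintro y₁ ⟨x₁, hx₁, hy₁⟩ y₂ ⟨x₂, hx₂, hy₂⟩
  wlog hle : x₁ ≤ x₂ generalizing x₁ x₂ y₁ y₂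
  · rw [uIcc_comm]
    exact this x₂ hx₂ hy₂ x₁ hx₁ hy₁ (le_of_not_ge hle)
  let g : ℕ → ℕ := fun k => (f k).getOrElse 0
  have hg : ∀ k ∈ I, g k ∈ f k := fun k hk => by
    simpa only [g, Part.getOrElse_of_dom _ (hI.1 hk)] using Part.get_mem (hI.1 hk)
  have hIcc : Icc x₁ x₂ ⊆ I := hI.2.out hx₁ hx₂
  have hstep : ∀ k ∈ Ico x₁ x₂, g (k + 1) ≤ g k + 1 ∧ g k ≤ g (k + 1) + 1 := fun k hk => by
    have := hedge (hg k (hIcc (Ico_subset_Icc_self hk)))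
      (hg (k + 1) (hIcc ⟨hk.1.trans k.le_succ, hk.2⟩)) (Or.inl rfl)
    unfold adj at this
    omega
  rw [Part.mem_unique hy₁ (hg x₁ hx₁), Part.mem_unique hy₂ (hg x₂ hx₂)]
  rintro z hz
  obtain ⟨k, hk, rfl⟩ := uIcc_subset_image_Icc_of_step_le_one hle hstep hz
  exact ⟨k, hIcc hk, hg k (hIcc hk)⟩

lemma IsMaxIntervalOf.nonempty {I X : Set ℕ} (h : IsMaxIntervalOf I X) (hX : X.Nonempty) :
    I.Nonempty := by
  obtain ⟨x, hx⟩ := hX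
  by_contra hI
  rw [not_nonempty_iff_eq_empty] at hI
  have hsingleton : IsIntervalOf {x} X :=
    isIntervalOf_iff.2 ⟨singleton_subset_iff.2 hx, ordConnected_singleton⟩
  exact empty_ne_singleton x (hI ▸ h.2 {x} hsingleton (hI ▸ empty_subset _))

lemma IsMaxIntervalOf.mem_of_adj {I X : Set ℕ} (h : IsMaxIntervalOf I X) {x u : ℕ}
    (hx : x ∈ I) (hu : u ∈ X) (hxu : adj x u) : u ∈ I := by
  obtain ⟨hIX, hI⟩ := isIntervalOf_iff.1 h.1
  have hinsert : IsIntervalOf (insert u I) X := by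
    refine isIntervalOf_iff.2 ⟨insert_subset hu hIX,
      (ordConnected_iff_uIcc_subset_left (mem_insert_of_mem u hx)).2 fun y hy => ?_⟩
    rcases hy with rfl | hy
    · intro z hz
      rw [mem_uIcc] at hz
      unfold adj at hxu
      rcases (by omega : z = y ∨ z = x) with rfl | rfl
      · exact mem_insert z I
      · exact mem_insert_of_mem y hx
    · exact (hI.uIcc_subset hx hy).trans (subset_insert u I)
  rw [h.2 _ hinsert (subset_insert u I)]
  exact mem_insert u I

lemma isMaxIntervalOf_iff {I X : Set ℕ} :
    IsMaxIntervalOf I X ↔ IsIntervalOf I X ∧ (X.Nonempty → I.Nonempty) ∧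
      ∀ ⦃x u : ℕ⦄, x ∈ I → u ∈ X → adj x u → u ∈ I := by
  refine ⟨fun h => ⟨h.1, h.nonempty, fun _ _ => h.mem_of_adj⟩,
    fun ⟨hI, hne, hadj⟩ => ⟨hI, fun J hJ hIJ => hIJ.antisymm fun y hy => ?_⟩⟩
  obtain ⟨x, hx⟩ := hne ⟨y, hJ.1 hy⟩
  obtain ⟨hJX, hJ⟩ := isIntervalOf_iff.1 hJ
  -- walk from `x` to `y` through `J`, one neighbour at a time
  rcases le_total x y with hxy | hyx
  · induction y, hxy using Nat.le_induction with
    | base => exact hx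
    | succ y hxy ih =>
      exact hadj (ih (hJ.out (hIJ hx) hy ⟨hxy, y.le_succ⟩)) (hJX hy) (Or.inl rfl)
  · induction hyx using Nat.decreasingInduction with
    | self => exact hx
    | of_succ y hyx ih =>
      exact hadj (ih (hJ.out hy (hIJ hx) ⟨y.le_succ, hyx⟩)) (hJX hy) (Or.inr rfl)

theorem stmt2 (n : ℕ) (f : ℕ →. ℕ) (hf : IsPAut n f) (I : Set ℕ)
    (hI : IsMaxIntervalOf I f.Dom) :
    IsMaxIntervalOf (f.image I) f.ran := by
  obtain ⟨hII, hne, hadj⟩ := isMaxIntervalOf_iff.1 hI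
  refine isMaxIntervalOf_iff.2 ⟨hII.image hf.1.edge, fun ⟨_, u, hu⟩ => ?_, ?_⟩
  · obtain ⟨x, hx⟩ := hne ⟨u, Part.dom_iff_mem.2 ⟨_, hu⟩⟩
    obtain ⟨y, hy⟩ := Part.dom_iff_mem.1 (hII.1 hx)
    exact ⟨y, x, hx, hy⟩
  · rintro y v ⟨x, hx, hy⟩ ⟨u, hv⟩ hyv
    exact ⟨u, hadj hx (Part.dom_iff_mem.2 ⟨v, hv⟩) (hf.2 hy hv hyv), hv⟩
end

section
/- For n ≥ 3, the monoid IEnd(P_n) of injective partial endomorphisms of the path P_n is not an inverse semigroup; specifically, the partial map sending 1↦1 and 3↦2 (with domain {1,3}) is an injective partial endomorphism that is not a regular element of IEnd(P_n). -/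
open scoped Classical

/-- The partial map `1 ↦ 1`, `3 ↦ 2`, with domain `{1,3}`. -/
def beta13 : ℕ →. ℕ := fun x =>
  if x = 1 then Part.some 1 else if x = 3 then Part.some 2 else Part.none

/-!
If `β g β = β`, then for every value `a = xβ` the map `g` sends `a` back into the preimage
of `a` under `β`. For `β = beta13` this forces `1 ↦ 1` and `2 ↦ 3`, so `g` would send the
adjacent vertices `1, 2` to the non-adjacent vertices `1, 3`.
-/

lemma mem_pcomp {f g : ℕ →. ℕ} {x c : ℕ} :
    c ∈ pcomp f g x ↔ ∃ b, b ∈ f x ∧ c ∈ g b :=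
  Part.mem_bind_iff

lemma exists_mem_of_pcomp_pcomp_eq {f g : ℕ →. ℕ} (h : pcomp (pcomp f g) f = f) {x a : ℕ}
    (ha : a ∈ f x) : ∃ y, y ∈ g a ∧ a ∈ f y := by
  rw [← h] at ha
  obtain ⟨y, hy, hay⟩ := mem_pcomp.1 ha
  obtain ⟨a', ha', hya'⟩ := mem_pcomp.1 hy
  obtain rfl : a' = a := Part.mem_unique ha' (h ▸ ha)
  exact ⟨y, hya', hay⟩

lemma mem_beta13 {x a : ℕ} : a ∈ beta13 x ↔ (x = 1 ∧ a = 1) ∨ (x = 3 ∧ a = 2) := by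
  unfold beta13
  split_ifs <;> simp [Part.mem_some_iff, eq_comm, *]

lemma isIEnd_beta13 {n : ℕ} (hn : 3 ≤ n) : IsIEnd n beta13 where
  dom_subset x hx := by
    obtain ⟨a, ha⟩ := Part.dom_iff_mem.1 hx
    rcases mem_beta13.1 ha with ⟨rfl, _⟩ | ⟨rfl, _⟩ <;> constructor <;> omega
  ran_subset a := by
    rintro ⟨x, hx⟩
    rcases mem_beta13.1 hx with ⟨_, rfl⟩ | ⟨_, rfl⟩ <;> constructor <;> omega
  inj x y a hx hy := by
    rcases mem_beta13.1 hx with ⟨rfl, rfl⟩ | ⟨rfl, rfl⟩ <;>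
      rcases mem_beta13.1 hy with ⟨rfl, _⟩ | ⟨rfl, _⟩ <;> omega
  edge u v a b hu hv huv := by
    rcases mem_beta13.1 hu with ⟨rfl, _⟩ | ⟨rfl, _⟩ <;>
      rcases mem_beta13.1 hv with ⟨rfl, _⟩ | ⟨rfl, _⟩ <;> unfold adj at * <;> omega

theorem stmt4 (n : ℕ) (hn : 3 ≤ n) :
    IsIEnd n beta13 ∧
    ¬ ∃ g : ℕ →. ℕ, IsIEnd n g ∧ pcomp (pcomp beta13 g) beta13 = beta13 := by
  refine ⟨isIEnd_beta13 hn, ?_⟩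
  rintro ⟨g, hg, h⟩
  obtain ⟨y₁, hy₁, h₁⟩ := exists_mem_of_pcomp_pcomp_eq h (mem_beta13.2 (.inl ⟨rfl, rfl⟩))
  obtain ⟨y₂, hy₂, h₂⟩ := exists_mem_of_pcomp_pcomp_eq h (mem_beta13.2 (.inr ⟨rfl, rfl⟩))
  obtain rfl : y₁ = 1 := by rw [mem_beta13] at h₁; omega
  obtain rfl : y₂ = 3 := by rw [mem_beta13] at h₂; omega
  have : adj 1 3 := hg.edge hy₁ hy₂ (.inl rfl)
  unfold adj at this
  omega
end
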